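/- arXiv:2202.05818 — 2 statements merged into one kernel-verified Lean document; each statement's English description precedes it below -/
import Mathlib

section
/- Let R be a complete local Noetherian ring with residue field F, G a profinite group, and ρ : G → GL_n(R) a continuous lift of an absolutely irreducible representation ρ̄ : G → GL_n(F). If a ∈ GL_n(R) satisfies a ρ(g) a⁻¹ = ρ(g) for all g ∈ G, then a is a scalar matrix, i.e. a ∈ R^× (embedded diagonally). -/
/-!
Over the algebraic closure of the residue field `k`, a matrix commuting with `ρ̄` has an
eigenspace that is `ρ̄`-stable, hence everything, so it is scalar; this descends to `k`.
To lift to `R`, subtract from `a` the scalar `a₀₀` and let `J` be the ideal generated by the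
entries of the difference `Y`. Any `R`-linear map `ψ : J → k` turns `Y` into a matrix over `k`
commuting with `ρ̄` with vanishing `(0,0)` entry, hence zero; so `ψ = 0`, and since `J` is
finitely generated, Nakayama's lemma gives `J = 0`.
-/

open Matrix IsLocalRing

/-- Absolute irreducibility of a mod-`p` representation: after extension of scalars to any
field extension, there is no nontrivial invariant subspace. -/
def AbsolutelyIrreducible {G : Type} [Group G] {F : Type} [Field F] {n : ℕ}
    (ρbar : G →* GL (Fin n) F) : Prop :=
  ∀ (F' : Type) [Field F'] [Algebra F F'],
    ∀ W : Submodule F' (Fin n → F'),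
      (∀ g : G, ∀ x ∈ W,
        ((ρbar g : Matrix (Fin n) (Fin n) F).map (algebraMap F F')).mulVec x ∈ W) →
      W = ⊥ ∨ W = ⊤

theorem Matrix.mem_range_scalar_of_commute_of_irreducible {K : Type*} [Field K] [IsAlgClosed K]
    {m : Type*} [Fintype m] [DecidableEq m] {ι : Type*} (M : ι → Matrix m m K)
    (hirr : ∀ W : Submodule K (m → K), (∀ i, ∀ x ∈ W, M i *ᵥ x ∈ W) → W = ⊥ ∨ W = ⊤)
    {X : Matrix m m K} (hX : ∀ i, Commute X (M i)) : X ∈ Set.range (scalar m) := by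
  cases isEmpty_or_nonempty m
  · exact ⟨0, Subsingleton.elim _ _⟩
  obtain ⟨μ, hμ⟩ := Module.End.exists_eigenvalue (toLin' X)
  have hinvariant : ∀ i, ∀ x ∈ Module.End.eigenspace (toLin' X) μ,
      M i *ᵥ x ∈ Module.End.eigenspace (toLin' X) μ := by
    intro i x hx
    rw [Module.End.mem_eigenspace_iff, toLin'_apply] at hx ⊢
    rw [mulVec_mulVec, (hX i).eq, ← mulVec_mulVec, hx, mulVec_smul]
  have htop := (hirr _ hinvariant).resolve_left hμ
  refine ⟨μ, toLin'.injective (LinearMap.ext fun x => ?_)⟩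
  have hx : x ∈ Module.End.eigenspace (toLin' X) μ := htop ▸ Submodule.mem_top
  rw [Module.End.mem_eigenspace_iff] at hx
  rw [hx, toLin'_apply, scalar_apply]
  ext k
  simp [mulVec_diagonal]

theorem Matrix.mem_range_scalar_of_map_mem_range_scalar {R S : Type*} [CommRing R] [CommRing S]
    {m : Type*} [Fintype m] [DecidableEq m] {f : R →+* S} (hf : Function.Injective f)
    {X : Matrix m m R} (h : X.map f ∈ Set.range (scalar m)) : X ∈ Set.range (scalar m) := by
  rw [mem_range_scalar_iff_commute_single'] at h ⊢
  intro i j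
  refine map_injective hf ?_
  simpa only [Matrix.map_mul, map_single, map_one] using (h i j).eq

open TensorProduct in
theorem IsLocalRing.exists_linearMap_residueField_ne_zero {R M : Type*} [CommRing R]
    [IsLocalRing R] [AddCommGroup M] [Module R M] [Module.Finite R M] [Nontrivial M] :
    ∃ ψ : M →ₗ[R] ResidueField R, ψ ≠ 0 := by
  have : Nontrivial (ResidueField R ⊗[R] M) := by
    rw [← not_subsingleton_iff_nontrivial, subsingleton_tensorProduct]
    exact not_subsingleton M
  obtain ⟨x, hx⟩ := exists_ne (0 : ResidueField R ⊗[R] M)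
  obtain ⟨φ, hφ⟩ : ∃ φ : Module.Dual (ResidueField R) (ResidueField R ⊗[R] M), φ x ≠ 0 := by
    by_contra! h
    exact hx ((Module.forall_dual_apply_eq_zero_iff _ x).mp h)
  refine ⟨φ.restrictScalars R ∘ₗ TensorProduct.mk R _ M 1, fun hψ => hφ ?_⟩
  suffices φ = 0 by rw [this, LinearMap.zero_apply]
  refine TensorProduct.AlgebraTensorModule.ext fun a y => ?_
  have := LinearMap.congr_fun hψ y
  simp only [LinearMap.coe_comp, Function.comp_apply, TensorProduct.mk_apply,
    LinearMap.coe_restrictScalars, LinearMap.zero_apply] at this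
  rw [← mul_one a, ← smul_eq_mul, ← TensorProduct.smul_tmul', map_smul, this, smul_zero,
    LinearMap.zero_apply]

section ResidueLift

variable {R : Type*} [CommRing R] [IsLocalRing R] {m : Type*} [Fintype m] [DecidableEq m]
  {ι : Type*} (M : ι → Matrix m m R)
  (hM : ∀ Y : Matrix m m (ResidueField R), (∀ k, Commute Y ((M k).map (residue R))) →
    Y ∈ Set.range (scalar m))
include hM

theorem IsLocalRing.matrix_eq_zero_of_commute {Y : Matrix m m R} (hY : ∀ k, Commute Y (M k))
    {i₀ : m} (hY₀ : Y i₀ i₀ = 0) : Y = 0 := by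
  set J := Submodule.span R (Set.range fun p : m × m => Y p.1 p.2)
  suffices J = ⊥ by
    ext i j
    exact (Submodule.mem_bot R).mp (this ▸ Submodule.subset_span ⟨(i, j), rfl⟩)
  by_contra hJ
  have : Nontrivial J := Submodule.nontrivial_iff_ne_bot.mpr hJ
  have : Module.Finite R J := Module.Finite.span_of_finite R (Set.finite_range _)
  obtain ⟨ψ, hψ⟩ := exists_linearMap_residueField_ne_zero (R := R) (M := J)
  let y : m → m → J := fun i j => ⟨Y i j, Submodule.subset_span ⟨(i, j), rfl⟩⟩
  have hres : ∀ (r : R) (z : J), residue R r * ψ z = ψ (r • z) := fun r z => by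
    rw [map_smul, Algebra.smul_def, ResidueField.algebraMap_eq]
  have hcomm : ∀ k, Commute (Matrix.of fun i j => ψ (y i j)) ((M k).map (residue R)) := by
    intro k
    ext i j
    simp only [mul_apply, of_apply, map_apply]
    simp_rw [mul_comm (ψ _), hres, ← map_sum]
    congr 1
    apply Subtype.ext
    simpa [y, mul_apply, mul_comm] using ext_iff.mpr (hY k).eq i j
  obtain ⟨c, hc⟩ := hM _ hcomm
  have hy₀ : y i₀ i₀ = 0 := Subtype.ext hY₀
  obtain rfl : c = 0 := by simpa [hy₀] using ext_iff.mpr hc i₀ i₀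
  refine hψ (LinearMap.ext_on Submodule.span_span_coe_preimage ?_)
  rintro z ⟨⟨i, j⟩, hz⟩
  obtain rfl : z = y i j := Subtype.ext hz.symm
  simpa using (ext_iff.mpr hc i j).symm

theorem IsLocalRing.mem_range_scalar_of_commute {X : Matrix m m R} (hX : ∀ k, Commute X (M k)) :
    X ∈ Set.range (scalar m) := by
  cases isEmpty_or_nonempty m
  · exact ⟨0, Subsingleton.elim _ _⟩
  obtain ⟨i₀⟩ := ‹Nonempty m›
  refine ⟨X i₀ i₀, (sub_eq_zero.mp ?_).symm⟩
  refine matrix_eq_zero_of_commute M hM (fun k => ?_) (i₀ := i₀) (by simp)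
  exact (hX k).sub_left (scalar_commute _ (Commute.all _) _)

end ResidueLift

theorem AbsolutelyIrreducible.mem_range_scalar_of_commute {G F : Type} [Group G] [Field F]
    {n : ℕ} {ρbar : G →* GL (Fin n) F} (habs : AbsolutelyIrreducible ρbar)
    {X : Matrix (Fin n) (Fin n) F} (hX : ∀ g, Commute X (ρbar g : Matrix (Fin n) (Fin n) F)) :
    X ∈ Set.range (scalar (Fin n)) :=
  let K := AlgebraicClosure F
  mem_range_scalar_of_map_mem_range_scalar (algebraMap F K).injective <|
    mem_range_scalar_of_commute_of_irreducible _ (habs K) fun g =>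
      (hX g).map (algebraMap F K).mapMatrix

theorem Matrix.GeneralLinearGroup.exists_unit_eq_smul_one_of_mem_range_scalar {R : Type*}
    [CommRing R] {m : Type*} [Fintype m] [DecidableEq m] {a : GL m R}
    (ha : (a : Matrix m m R) ∈ Set.range (Matrix.scalar m)) :
    ∃ r : Rˣ, (a : Matrix m m R) = (r : R) • 1 := by
  cases isEmpty_or_nonempty m
  · exact ⟨1, Subsingleton.elim _ _⟩
  obtain ⟨i₀⟩ := ‹Nonempty m›
  obtain ⟨r, hr⟩ := ha
  have hinv : ((a⁻¹ : GL m R) : Matrix m m R) i₀ i₀ * r = 1 := by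
    have := Matrix.ext_iff.mpr (congrArg Units.val (inv_mul_cancel a)) i₀ i₀
    rwa [Units.val_mul, ← hr, scalar_apply, mul_diagonal, Units.val_one, one_apply_eq] at this
  refine ⟨(IsUnit.of_mul_eq_one_right _ hinv).unit, ?_⟩
  rw [IsUnit.unit_spec, ← hr, smul_one_eq_diagonal, scalar_apply]

theorem stmt_7_general (n : ℕ) (R : Type) [CommRing R] [IsLocalRing R]
    (G : Type) [Group G]
    (ρbar : G →* GL (Fin n) (ResidueField R)) (habs : AbsolutelyIrreducible ρbar)
    (ρ : G →* GL (Fin n) R)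
    (hlift : ∀ g : G, Units.map ((residue R).mapMatrix).toMonoidHom (ρ g) = ρbar g)
    (a : GL (Fin n) R) (ha : ∀ g : G, a * ρ g * a⁻¹ = ρ g) :
    ∃ r : Rˣ, (a : Matrix (Fin n) (Fin n) R) = (r : R) • (1 : Matrix (Fin n) (Fin n) R) := by
  have hres : ∀ g, (ρ g : Matrix (Fin n) (Fin n) R).map (residue R) = ρbar g := fun g =>
    congrArg Units.val (hlift g)
  have hcomm : ∀ g, Commute (a : Matrix (Fin n) (Fin n) R) (ρ g) := fun g =>
    Commute.units_val (mul_inv_eq_iff_eq_mul.mp (ha g))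
  refine GeneralLinearGroup.exists_unit_eq_smul_one_of_mem_range_scalar <|
    IsLocalRing.mem_range_scalar_of_commute (fun g => (ρ g : Matrix _ _ R)) ?_ hcomm
  intro Y hY
  exact habs.mem_range_scalar_of_commute fun g => hres g ▸ hY g

/-- The centralizer of a lift of an absolutely irreducible representation consists of
scalar matrices. -/
theorem stmt_7 (n : ℕ) (R : Type) [CommRing R] [IsLocalRing R] [IsNoetherianRing R]
    [IsAdicComplete (maximalIdeal R) R]
    [TopologicalSpace R] [IsTopologicalRing R]
    (G : Type) [Group G] [TopologicalSpace G] [IsTopologicalGroup G]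
    [CompactSpace G] [TotallyDisconnectedSpace G] [T2Space G]
    (ρbar : G →* GL (Fin n) (ResidueField R)) (habs : AbsolutelyIrreducible ρbar)
    (ρ : G →* GL (Fin n) R) (hcont : Continuous ρ)
    (hlift : ∀ g : G, Units.map ((residue R).mapMatrix).toMonoidHom (ρ g) = ρbar g)
    (a : GL (Fin n) R) (ha : ∀ g : G, a * ρ g * a⁻¹ = ρ g) :
    ∃ r : Rˣ, (a : Matrix (Fin n) (Fin n) R) = (r : R) • (1 : Matrix (Fin n) (Fin n) R) :=
  stmt_7_general n R G ρbar habs ρ hlift a ha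
end

section
/- Let R be a complete local Noetherian ring with residue field F, G a profinite group, ρ̄ : G → GL_2(F) absolutely irreducible, and ρ, ρ' : G → GL_2(R) two continuous lifts of ρ̄ with tr ρ(g) = tr ρ'(g) for all g ∈ G. Then there exists a ∈ ker(GL_2(R) → GL_2(F)) with ρ'(g) = a ρ(g) a⁻¹ for all g ∈ G. -/
open Matrix IsLocalRing

/-!
Burnside's theorem (Schur's lemma plus Jacobson density) shows that the images of `ρ̄` span
`M₂(F̄)`, hence, by the perfect trace pairing, `M₂(F)`; by Nakayama the images of `ρ` and of `ρ'`
span `M₂(R)`. Since `tr ρ(gh) = tr ρ'(gh)` and the trace pairing on `M₂(R)` is perfect, the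
subalgebra of `M₂(R) × M₂(R)` generated by the pairs `(ρ g, ρ' g)` is the graph of an algebra
endomorphism `φ` of `M₂(R)` with `φ ∘ ρ = ρ'`, congruent to the identity modulo `𝔪`. Like every
algebra endomorphism of a matrix algebra, `φ X * a = a * X` for `a = ∑ᵢ φ(E_{i0}) E_{0i}`, and `a`
reduces to `1`, so it is invertible.
-/

open Submodule

theorem MonoidHom.toSubmodule_adjoin_range {R A M : Type*} [CommSemiring R] [Semiring A]
    [Algebra R A] [Monoid M] (f : M →* A) :
    Subalgebra.toSubmodule (Algebra.adjoin R (Set.range f)) = span R (Set.range f) := by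
  rw [Algebra.adjoin_eq_span, ← MonoidHom.coe_mrange, Submonoid.closure_eq]

theorem Subalgebra.eq_top_of_isSimpleModule {K V : Type*} [Field K] [IsAlgClosed K]
    [AddCommGroup V] [Module K V] [FiniteDimensional K V]
    (A : Subalgebra K (Module.End K V)) [IsSimpleModule A V] : A = ⊤ := by
  have : Nontrivial V := IsSimpleModule.nontrivial A V
  have hscalar : ∀ ψ : Module.End A V, ∃ c : K, ∀ v, ψ v = c • v := by
    intro ψ
    obtain ⟨c, hc⟩ := Module.End.exists_eigenvalue (ψ.restrictScalars K)
    obtain ⟨v, hv⟩ := hc.exists_hasEigenvector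
    have hker : ¬Function.Injective ⇑(ψ - c • (1 : Module.End A V)) := fun hinj =>
      hv.2 (hinj (by simpa [sub_eq_zero] using hv.apply_eq_smul))
    have hzero := (ψ - c • 1).injective_or_eq_zero.resolve_left hker
    exact ⟨c, fun w => sub_eq_zero.mp (LinearMap.congr_fun hzero w)⟩
  have : IsScalarTower K (Module.End A V) V := ⟨fun _ _ _ => rfl⟩
  have : Module.Finite (Module.End A V) V := Module.Finite.of_restrictScalars_finite K _ _
  rw [eq_top_iff]
  intro f _
  -- Jacobson density: `f` commutes with `Module.End A V`, which consists of scalars.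
  obtain ⟨a, ha⟩ := Module.Finite.toModuleEnd_moduleEnd_surjective (R := A) (M := V)
    { toFun := f
      map_add' := f.map_add
      map_smul' := fun ψ v => by
        obtain ⟨c, hc⟩ := hscalar ψ
        simp [hc] }
  convert a.2
  ext v
  exact (LinearMap.congr_fun ha v).symm

namespace Matrix
variable {n : Type*} [Fintype n] [DecidableEq n]

theorem eq_zero_of_forall_trace_mul_eq_zero {R : Type*} [CommRing R] {C : Matrix n n R}
    (h : ∀ X, trace (C * X) = 0) : C = 0 := by
  ext i j
  simpa [trace_mul_single] using h (single j i 1)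

theorem eq_zero_of_trace_mul_eq_zero_of_span_eq_top {R : Type*} [CommRing R]
    {s : Set (Matrix n n R)} (hs : span R s = ⊤) {C : Matrix n n R}
    (h : ∀ X ∈ s, trace (C * X) = 0) : C = 0 :=
  eq_zero_of_forall_trace_mul_eq_zero fun X =>
    LinearMap.congr_fun (LinearMap.ext_on hs (f := traceLinearMap n R R ∘ₗ LinearMap.mulLeft R C)
      (g := 0) h) X

theorem trace_of_apply_single_mul {R : Type*} [CommRing R] (f : Matrix n n R →ₗ[R] R)
    (X : Matrix n n R) : trace (of (fun i j => f (single j i 1)) * X) = f X := by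
  have : traceLinearMap n R R ∘ₗ LinearMap.mulLeft R (of fun i j => f (single j i 1)) = f := by
    apply ext_linearMap
    intro i j
    ext
    simp [trace_mul_single]
  exact LinearMap.congr_fun this X

theorem exists_trace_mul_eq_zero_of_ne_top {K : Type*} [Field K] {W : Submodule K (Matrix n n K)}
    (hW : W ≠ ⊤) : ∃ C ≠ 0, ∀ X ∈ W, trace (C * X) = 0 := by
  obtain ⟨f, hf, hWf⟩ := W.exists_le_ker_of_lt_top hW.lt_top
  refine ⟨of fun i j => f (single j i 1), fun hC => hf (LinearMap.ext fun X => ?_),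
    fun X hX => (trace_of_apply_single_mul f X).trans (hWf hX)⟩
  rw [← trace_of_apply_single_mul f X, hC, zero_mul, trace_zero, LinearMap.zero_apply]

theorem span_eq_top_of_span_map_eq_top {F K : Type*} [Field F] [Field K] [Algebra F K]
    {s : Set (Matrix n n F)} (h : span K ((fun X => X.map (algebraMap F K)) '' s) = ⊤) :
    span F s = ⊤ := by
  by_contra hs
  obtain ⟨C, hC, hCs⟩ := exists_trace_mul_eq_zero_of_ne_top hs
  have hCK : C.map (algebraMap F K) = 0 := by
    refine eq_zero_of_trace_mul_eq_zero_of_span_eq_top h ?_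
    rintro _ ⟨X, hX, rfl⟩
    rw [← Matrix.map_mul, ← AddMonoidHom.map_trace, hCs X (subset_span hX), _root_.map_zero]
  exact hC (map_injective (algebraMap F K).injective (by simpa using hCK))

theorem span_eq_top_of_span_map_residue_eq_top {R : Type*} [CommRing R] [IsLocalRing R]
    {s : Set (Matrix n n R)}
    (h : span (ResidueField R) ((fun X => X.map (residue R)) '' s) = ⊤) : span R s = ⊤ := by
  let μ := (Algebra.linearMap R (ResidueField R)).mapMatrix (m := n) (n := n)
  have hμ : (span R s).map μ = ⊤ := by
    rw [map_span, ← restrictScalars_span R _ residue_surjective, restrictScalars_eq_top_iff]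
    exact h
  have hker : LinearMap.ker μ ≤ maximalIdeal R • ⊤ := by
    intro X hX
    rw [matrix_eq_sum_single X]
    refine sum_mem fun i _ => sum_mem fun j _ => ?_
    rw [← mul_one (X i j), ← smul_eq_mul, ← smul_single]
    refine smul_mem_smul ?_ mem_top
    rw [← residue_eq_zero_iff]
    exact congr_fun (congr_fun hX i) j
  refine top_le_iff.mp (le_of_le_smul_of_le_jacobson_bot Module.Finite.fg_top
    (jacobson_eq_maximalIdeal ⊥ bot_ne_top).ge ?_)
  calc ⊤ ≤ span R s ⊔ LinearMap.ker μ := by rw [← comap_map_eq, hμ, comap_top]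
    _ ≤ span R s ⊔ maximalIdeal R • ⊤ := sup_le_sup_left hker _

theorem isUnit_of_isUnit_map_residue {R : Type*} [CommRing R] [IsLocalRing R] {A : Matrix n n R}
    (h : IsUnit (A.map (residue R))) : IsUnit A := by
  rw [isUnit_iff_isUnit_det] at h ⊢
  rwa [← isUnit_map_iff (residue R), RingHom.map_det]

section intertwiner
variable {R : Type*} [CommRing R] (φ : Matrix n n R →ₐ[R] Matrix n n R) (i₀ : n)

-- Skolem–Noether for `Mₙ(R)`: `φ (E k l) * a = φ (E k i₀) * E i₀ l = a * E k l`.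
def intertwiner : Matrix n n R := ∑ i, φ (single i i₀ 1) * single i₀ i 1

theorem apply_mul_intertwiner (X : Matrix n n R) :
    φ X * intertwiner φ i₀ = intertwiner φ i₀ * X := by
  suffices h : LinearMap.mulRight R (intertwiner φ i₀) ∘ₗ φ.toLinearMap =
      LinearMap.mulLeft R (intertwiner φ i₀) from LinearMap.congr_fun h X
  apply ext_linearMap
  intro k l
  refine LinearMap.ext_ring ?_
  have hφ : ∀ i, φ (single k l 1) * φ (single i i₀ 1) = if l = i then φ (single k i₀ 1) else 0 := by
    intro i
    rw [← map_mul]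
    split_ifs with h
    · rw [h, single_mul_single_same, mul_one]
    · rw [single_mul_single_of_ne (h := h), map_zero]
  have hE : ∀ i, single i₀ i (1 : R) * single k l 1 = if i = k then single i₀ l 1 else 0 := by
    intro i
    split_ifs with h
    · rw [h, single_mul_single_same, mul_one]
    · rw [single_mul_single_of_ne (h := h)]
  simp [intertwiner, Finset.mul_sum, Finset.sum_mul, mul_assoc, ← mul_assoc (φ (single k l 1)),
    hφ, hE]

theorem map_intertwiner {S : Type*} [CommRing S] (f : R →+* S)
    (hφ : ∀ X, (φ X).map f = X.map f) : (intertwiner φ i₀).map f = 1 := by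
  have hφ' : ∀ X, f.mapMatrix (φ X) = f.mapMatrix X := hφ
  change f.mapMatrix (intertwiner φ i₀) = 1
  calc f.mapMatrix (intertwiner φ i₀)
      = ∑ i, f.mapMatrix (φ (single i i₀ 1)) * f.mapMatrix (single i₀ i 1) := by
        simp only [intertwiner, map_sum, map_mul]
    _ = f.mapMatrix (∑ i, single i i₀ 1 * single i₀ i 1) := by simp only [hφ', map_sum, map_mul]
    _ = 1 := by simp only [single_mul_single_same, mul_one, sum_single_one, map_one]

end intertwiner

theorem span_range_eq_top_of_irreducible {K G : Type*} [Field K] [IsAlgClosed K] [Monoid G]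
    (ρ : G →* Matrix n n K)
    (hirr : ∀ W : Submodule K (n → K), (∀ g, ∀ x ∈ W, ρ g *ᵥ x ∈ W) → W = ⊥ ∨ W = ⊤) :
    span K (Set.range ρ) = ⊤ := by
  cases isEmpty_or_nonempty n
  · exact Subsingleton.elim _ _
  let T : G →* Module.End K (n → K) := (toLinAlgEquiv' : Matrix n n K ≃ₐ[K] _).toMonoidHom.comp ρ
  let A := Algebra.adjoin K (Set.range T)
  have : IsSimpleModule A (n → K) :=
    { eq_bot_or_eq_top := fun W => by
        have := hirr (W.restrictScalars K) fun g x hx =>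
          W.smul_mem (⟨T g, Algebra.subset_adjoin ⟨g, rfl⟩⟩ : A) hx
        rwa [restrictScalars_eq_bot_iff, restrictScalars_eq_top_iff] at this }
  have hA : Algebra.adjoin K (Set.range T) = ⊤ := Subalgebra.eq_top_of_isSimpleModule _
  have hT : span K (Set.range T) = ⊤ := by
    rw [← T.toSubmodule_adjoin_range, hA, Algebra.top_toSubmodule]
  have hρT : Set.range ρ =
      (toLinAlgEquiv' : Matrix n n K ≃ₐ[K] _).symm.toLinearMap '' Set.range T := by
    rw [← Set.range_comp]
    ext
    simp [T]
  rw [hρT, ← map_span, hT, Submodule.map_top, LinearMap.range_eq_top]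
  exact AlgEquiv.surjective _

end Matrix

section
variable {R n G : Type*} [CommRing R] [Fintype n] [DecidableEq n] [Monoid G]
  (ρ ρ' : G →* Matrix n n R)

theorem trace_mul_eq_of_mem_adjoin_range_prod (htr : ∀ g, trace (ρ g) = trace (ρ' g))
    {p : Matrix n n R × Matrix n n R} (hp : p ∈ Algebra.adjoin R (Set.range (ρ.prod ρ')))
    (h : G) : trace (p.1 * ρ h) = trace (p.2 * ρ' h) := by
  rw [← Subalgebra.mem_toSubmodule, MonoidHom.toSubmodule_adjoin_range] at hp
  induction hp using span_induction with
  | mem p hp =>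
    obtain ⟨g, rfl⟩ := hp
    simp [← map_mul, htr]
  | zero => simp
  | add p q _ _ hp hq => simp [add_mul, hp, hq]
  | smul c p _ hp => simp [hp]

theorem exists_algHom_apply_eq_of_trace_eq (htr : ∀ g, trace (ρ g) = trace (ρ' g))
    (hρ : span R (Set.range ρ) = ⊤) (hρ' : span R (Set.range ρ') = ⊤) :
    ∃ φ : Matrix n n R →ₐ[R] Matrix n n R, ∀ g, φ (ρ g) = ρ' g := by
  let Γ := Algebra.adjoin R (Set.range (ρ.prod ρ'))
  let π₁ : Γ →ₐ[R] Matrix n n R := (AlgHom.fst R _ _).comp Γ.val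
  have hinj : Function.Injective π₁ := by
    rw [injective_iff_map_eq_zero]
    rintro ⟨⟨X, Y⟩, hp⟩ (rfl : X = 0)
    have hY : Y = 0 := by
      refine eq_zero_of_trace_mul_eq_zero_of_span_eq_top hρ' ?_
      rintro _ ⟨h, rfl⟩
      simpa using (trace_mul_eq_of_mem_adjoin_range_prod ρ ρ' htr hp h).symm
    subst hY
    rfl
  have hsurj : Function.Surjective π₁ := by
    intro X
    have : X ∈ Γ.map (AlgHom.fst R _ _) := by
      rw [AlgHom.map_adjoin, ← Set.range_comp]
      exact Algebra.span_le_adjoin R _ (hρ ▸ mem_top)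
    obtain ⟨p, hp, rfl⟩ := this
    exact ⟨⟨p, hp⟩, rfl⟩
  let e := AlgEquiv.ofBijective π₁ ⟨hinj, hsurj⟩
  refine ⟨((AlgHom.snd R _ _).comp Γ.val).comp e.symm.toAlgHom, fun g => ?_⟩
  have : e.symm (ρ g) = ⟨(ρ g, ρ' g), Algebra.subset_adjoin ⟨g, rfl⟩⟩ := e.symm_apply_eq.mpr rfl
  simp [this]

theorem exists_conj_of_trace_eq [IsLocalRing R] [Nonempty n]
    (hspan : span (ResidueField R) (Set.range fun g => (ρ g).map (residue R)) = ⊤)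
    (hred : ∀ g, (ρ' g).map (residue R) = (ρ g).map (residue R))
    (htr : ∀ g, trace (ρ g) = trace (ρ' g)) :
    ∃ a : (Matrix n n R)ˣ, (a : Matrix n n R).map (residue R) = 1 ∧ ∀ g, ρ' g * a = a * ρ g := by
  have hρ : span R (Set.range ρ) = ⊤ :=
    span_eq_top_of_span_map_residue_eq_top (by rwa [← Set.range_comp])
  have hρ' : span R (Set.range ρ') = ⊤ :=
    span_eq_top_of_span_map_residue_eq_top <| by
      rw [← Set.range_comp]; simpa [Function.comp_def, hred]
  obtain ⟨φ, hφ⟩ := exists_algHom_apply_eq_of_trace_eq ρ ρ' htr hρ hρ'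
  have hφres : ∀ X, (φ X).map (residue R) = X.map (residue R) := by
    let μ := (Algebra.linearMap R (ResidueField R)).mapMatrix (m := n) (n := n)
    have : μ ∘ₗ φ.toLinearMap = μ := LinearMap.ext_on_range hρ fun g => by
      simp only [μ, LinearMap.comp_apply, AlgHom.toLinearMap_apply, hφ]
      exact hred g
    exact fun X => LinearMap.congr_fun this X
  let i₀ := Classical.arbitrary n
  have ha := map_intertwiner φ i₀ (residue R) hφres
  obtain ⟨u, hu⟩ := isUnit_of_isUnit_map_residue (ha ▸ isUnit_one)
  exact ⟨u, by rw [hu, ha], fun g => by rw [hu, ← hφ g]; exact apply_mul_intertwiner φ i₀ (ρ g)⟩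

end

theorem AbsolutelyIrreducible.span_range_eq_top {G F : Type} [Group G] [Field F] {n : ℕ}
    {ρbar : G →* GL (Fin n) F} (h : AbsolutelyIrreducible ρbar) :
    span F (Set.range fun g => (ρbar g : Matrix (Fin n) (Fin n) F)) = ⊤ := by
  let K := AlgebraicClosure F
  let ρK : G →* Matrix (Fin n) (Fin n) K :=
    (algebraMap F K).mapMatrix.toMonoidHom.comp ((Units.coeHom _).comp ρbar)
  refine span_eq_top_of_span_map_eq_top (K := K) ?_
  rw [← Set.range_comp]
  exact span_range_eq_top_of_irreducible ρK (h K)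

theorem stmt_8_general (R : Type) [CommRing R] [IsLocalRing R]
    (G : Type) [Group G]
    (ρbar : G →* GL (Fin 2) (ResidueField R)) (habs : AbsolutelyIrreducible ρbar)
    (ρ ρ' : G →* GL (Fin 2) R)
    (hlift : ∀ g : G, Units.map ((residue R).mapMatrix).toMonoidHom (ρ g) = ρbar g)
    (hlift' : ∀ g : G, Units.map ((residue R).mapMatrix).toMonoidHom (ρ' g) = ρbar g)
    (htr : ∀ g : G, (ρ g : Matrix (Fin 2) (Fin 2) R).trace = (ρ' g : Matrix (Fin 2) (Fin 2) R).trace) :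
    ∃ a : GL (Fin 2) R,
      Units.map ((residue R).mapMatrix).toMonoidHom a = 1 ∧
      ∀ g : G, ρ' g = a * ρ g * a⁻¹ := by
  have hred : ∀ g, (ρ g : Matrix (Fin 2) (Fin 2) R).map (residue R) = ρbar g :=
    fun g => congrArg Units.val (hlift g)
  have hred' : ∀ g, (ρ' g : Matrix (Fin 2) (Fin 2) R).map (residue R) = ρbar g :=
    fun g => congrArg Units.val (hlift' g)
  obtain ⟨a, ha, hconj⟩ := exists_conj_of_trace_eq ((Units.coeHom _).comp ρ)
    ((Units.coeHom _).comp ρ') (by simpa [hred] using habs.span_range_eq_top)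
    (by simp [hred, hred']) htr
  exact ⟨a, Units.ext ha, fun g => eq_mul_inv_of_mul_eq (Units.ext (hconj g))⟩

/-- Carayol's lemma: two lifts of an absolutely irreducible residual representation with
equal traces are conjugate by an element reducing to the identity. -/
theorem stmt_8 (R : Type) [CommRing R] [IsLocalRing R] [IsNoetherianRing R]
    [IsAdicComplete (maximalIdeal R) R]
    [TopologicalSpace R] [IsTopologicalRing R]
    (h2 : (2 : ResidueField R) ≠ 0)
    (G : Type) [Group G] [TopologicalSpace G] [IsTopologicalGroup G]
    [CompactSpace G] [TotallyDisconnectedSpace G] [T2Space G]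
    (ρbar : G →* GL (Fin 2) (ResidueField R)) (habs : AbsolutelyIrreducible ρbar)
    (ρ ρ' : G →* GL (Fin 2) R) (hcont : Continuous ρ) (hcont' : Continuous ρ')
    (hlift : ∀ g : G, Units.map ((residue R).mapMatrix).toMonoidHom (ρ g) = ρbar g)
    (hlift' : ∀ g : G, Units.map ((residue R).mapMatrix).toMonoidHom (ρ' g) = ρbar g)
    (htr : ∀ g : G, (ρ g : Matrix (Fin 2) (Fin 2) R).trace = (ρ' g : Matrix (Fin 2) (Fin 2) R).trace) :
    ∃ a : GL (Fin 2) R,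
      Units.map ((residue R).mapMatrix).toMonoidHom a = 1 ∧
      ∀ g : G, ρ' g = a * ρ g * a⁻¹ :=
  stmt_8_general R G ρbar habs ρ ρ' hlift hlift' htr
end
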